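/- arXiv:1809.03079 — 2 statements merged into one kernel-verified Lean document; each statement's English description precedes it below -/
import Mathlib

section
/- For a nonnegative real sequence (a_n) with Σ a_n^2 < ∞, one has Σ_{n=1}^∞ ((1/n) Σ_{k=1}^n a_k)^2 ≤ 4 Σ_{n=1}^∞ a_n^2 (discrete Hardy inequality for p = 2). -/
/-!
Writing `b n` for the mean of `a 0, …, a n`, the identity `a (n+1) = (n+2) b (n+1) - (n+1) b n`
turns `b n ^ 2 - 2 a n b n` into a telescoping term minus `n (b n - b (n-1))²`, so that
`∑ b² ≤ 2 ∑ a b` on every initial segment. Cauchy–Schwarz then gives `∑ b² ≤ 4 ∑ a²`, and the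
bound passes to the infinite sums.
-/

open Finset

noncomputable def cesaroMean (a : ℕ → ℝ) (n : ℕ) : ℝ :=
  (1 / (n + 1 : ℝ)) * ∑ k ∈ range (n + 1), a k

namespace cesaroMean

variable (a : ℕ → ℝ)

theorem succ_mul (n : ℕ) : ((n : ℝ) + 1) * cesaroMean a n = ∑ k ∈ range (n + 1), a k := by
  rw [cesaroMean]
  field_simp

@[simp]
theorem zero : cesaroMean a 0 = a 0 := by
  simp [cesaroMean]

theorem sq_sub_two_mul_le (n : ℕ) :
    cesaroMean a n ^ 2 - 2 * (a n * cesaroMean a n)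
      ≤ n * cesaroMean a (n - 1) ^ 2 - (n + 1) * cesaroMean a n ^ 2 := by
  cases n with
  | zero => simp only [zero, Nat.cast_zero, zero_mul, zero_add, one_mul]; linarith
  | succ m =>
    have h_step : a (m + 1) = (m + 2) * cesaroMean a (m + 1) - (m + 1) * cesaroMean a m := by
      have h := succ_mul a (m + 1)
      rw [sum_range_succ, ← succ_mul] at h
      push_cast at h
      linarith
    simp only [Nat.add_sub_cancel, h_step]
    push_cast
    nlinarith [mul_nonneg (m.cast_nonneg : (0 : ℝ) ≤ m)
      (sq_nonneg (cesaroMean a m - cesaroMean a (m + 1)))]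

theorem sum_range_sq_le_two_mul_sum_mul (N : ℕ) :
    ∑ n ∈ range N, cesaroMean a n ^ 2 ≤ 2 * ∑ n ∈ range N, a n * cesaroMean a n := by
  set c : ℕ → ℝ := fun n => n * cesaroMean a (n - 1) ^ 2
  have h_telescope : ∑ n ∈ range N, (cesaroMean a n ^ 2 - 2 * (a n * cesaroMean a n))
      ≤ ∑ n ∈ range N, (c n - c (n + 1)) :=
    sum_le_sum fun n _ => by simpa [c] using sq_sub_two_mul_le a n
  rw [sum_range_sub', sum_sub_distrib, ← mul_sum] at h_telescope
  have hcN : 0 ≤ c N := by positivity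
  simp only [c, Nat.cast_zero, zero_mul] at h_telescope
  linarith

theorem sum_range_sq_le (N : ℕ) :
    ∑ n ∈ range N, cesaroMean a n ^ 2 ≤ 4 * ∑ n ∈ range N, a n ^ 2 := by
  set S := ∑ n ∈ range N, cesaroMean a n ^ 2
  have hS : 0 ≤ S := by positivity
  have h_two := sum_range_sq_le_two_mul_sum_mul a N
  have h_cs := sum_mul_sq_le_sq_mul_sq (range N) a (cesaroMean a)
  rcases hS.eq_or_lt with h | h
  · rw [← h]; positivity
  · nlinarith

end cesaroMean

theorem stmt1_general (a : ℕ → ℝ) (hsum : Summable fun n => a n ^ 2) :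
    ∑' n : ℕ, ((1 / (n + 1 : ℝ)) * ∑ k ∈ Finset.range (n + 1), a k) ^ 2
      ≤ 4 * ∑' n : ℕ, a n ^ 2 := by
  refine Real.tsum_le_of_sum_range_le (fun n => sq_nonneg _) fun N => ?_
  calc ∑ n ∈ range N, cesaroMean a n ^ 2 ≤ 4 * ∑ n ∈ range N, a n ^ 2 :=
        cesaroMean.sum_range_sq_le a N
    _ ≤ 4 * ∑' n, a n ^ 2 := by
        gcongr
        exact hsum.sum_le_tsum _ fun n _ => sq_nonneg _

/-- Discrete Hardy inequality for `p = 2`: for a nonnegative sequence `(a_n)_{n ≥ 1}`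
(here `a n` stands for `a_{n+1}`) with `Σ a_n² < ∞`,
`Σ ((1/n) Σ_{k ≤ n} a_k)² ≤ 4 Σ a_n²`. -/
theorem stmt1 (a : ℕ → ℝ) (ha : ∀ n, 0 ≤ a n) (hsum : Summable fun n => a n ^ 2) :
    ∑' n : ℕ, ((1 / (n + 1 : ℝ)) * ∑ k ∈ Finset.range (n + 1), a k) ^ 2
      ≤ 4 * ∑' n : ℕ, a n ^ 2 :=
  stmt1_general a hsum
end

section
/- In ℓ₂(Δ), the norm of the n-th unit vector satisfies ‖e_n‖ = √2 for all n ≥ 1 (with the convention c_0 = 0, so ‖e_1‖ accounts for differences at positions 1 and 2), while the distance from e_n to the span of {e_j : j ≠ n} tends to 0; in particular the coordinate functionals are unbounded uniformly in n. -/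
open Filter Topology

/-- The `ℓ₂(Δ)` norm of a sequence (convention `c 0 = 0`). -/
noncomputable def dN (c : ℕ → ℂ) : ℝ := Real.sqrt (∑' n : ℕ, ‖c (n + 1) - c n‖ ^ 2)

/-- The `n`-th standard unit sequence. -/
def eVec (j : ℕ) : ℕ → ℂ := fun n => if n = j then 1 else 0

/-- The distance in `ℓ₂(Δ)` from `e_n` to the (closed) span of `{e_j : j ≠ n, j ≥ 1}`. -/
noncomputable def distToOthers (n : ℕ) : ℝ :=
  sInf {r : ℝ | ∃ y ∈ Submodule.span ℂ {c : ℕ → ℂ | ∃ j : ℕ, 1 ≤ j ∧ j ≠ n ∧ c = eVec j},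
    r = dN (eVec n - y)}

/-!
The unit vector `e_n` has exactly two jumps of size one, at `n - 1` and at `n`, hence norm `√2`.
The tent sequence rising linearly from `0` at `0` to `1` at `n` and back to `0` at `2n` has
`2n` jumps of size `1/n`, hence norm `√(2/n)`. Since it vanishes at `0` and agrees with `e_n`
at `n`, the difference `e_n - tent` is a finite combination of the other `e_j`, so
`dist(e_n, span{e_j : j ≠ n}) ≤ √(2/n) → 0`. The same tent has `n`-th coordinate `1`, so
no bound `|c_n| ≤ M ‖c‖` can hold for all `n`.
-/

lemma dN_eq_sqrt_sum {c : ℕ → ℂ} {s : Finset ℕ} (h : ∀ k ∉ s, c (k + 1) = c k) :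
    dN c = √(∑ k ∈ s, ‖c (k + 1) - c k‖ ^ 2) := by
  rw [dN, tsum_eq_sum fun k hk => by simp [h k hk]]

lemma norm_natCast_sub_natCast_eq_one {a b : ℕ} (h : a = b + 1 ∨ b = a + 1) :
    ‖(a : ℂ) - b‖ = 1 := by
  rcases h with rfl | rfl <;> simp

lemma dN_eVec {n : ℕ} (hn : 1 ≤ n) : dN (eVec n) = √2 := by
  have hpred : n - 1 ≠ n := by omega
  rw [dN_eq_sqrt_sum (s := {n - 1, n}) fun k hk => by
    simp only [Finset.mem_insert, Finset.mem_singleton, not_or] at hk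
    simp [eVec, hk.2, show k + 1 ≠ n by omega]]
  rw [Finset.sum_pair hpred, Nat.sub_add_cancel hn]
  simp [eVec, hpred]
  norm_num

lemma sum_smul_eVec {y : ℕ → ℂ} {s : Finset ℕ} (h : ∀ k ∉ s, y k = 0) :
    ∑ j ∈ s, y j • eVec j = y := by
  funext k
  by_cases hk : k ∈ s <;> simp [Finset.sum_apply, eVec, hk, h]

lemma mem_span_eVec_of_eventually_zero {n N : ℕ} {y : ℕ → ℂ} (h0 : y 0 = 0) (hn : y n = 0)
    (hN : ∀ k, N < k → y k = 0) :
    y ∈ Submodule.span ℂ {c : ℕ → ℂ | ∃ j : ℕ, 1 ≤ j ∧ j ≠ n ∧ c = eVec j} := by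
  set s := (Finset.range (N + 1)).filter (y · ≠ 0)
  have hs : ∀ k ∉ s, y k = 0 := fun k hk => by
    by_contra hyk
    exact hk (Finset.mem_filter.mpr ⟨Finset.mem_range.mpr
      (Nat.lt_succ_of_le (not_lt.mp fun hNk => hyk (hN k hNk))), hyk⟩)
  rw [← sum_smul_eVec hs]
  refine Submodule.sum_mem _ fun j hj => Submodule.smul_mem _ _ (Submodule.subset_span ?_)
  have hyj : y j ≠ 0 := (Finset.mem_filter.mp hj).2
  exact ⟨j, Nat.one_le_iff_ne_zero.mpr fun h => hyj (h ▸ h0),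
    fun h => hyj (h ▸ hn), rfl⟩

noncomputable def tent (n : ℕ) : ℕ → ℂ := fun k => ((min k (2 * n - k) : ℕ) : ℂ) / n

lemma tent_zero (n : ℕ) : tent n 0 = 0 := by simp [tent]

lemma tent_self {n : ℕ} (hn : 1 ≤ n) : tent n n = 1 := by
  rw [tent, show min n (2 * n - n) = n by omega]
  exact div_self (Nat.cast_ne_zero.mpr (by omega))

lemma tent_of_two_mul_le {n k : ℕ} (h : 2 * n ≤ k) : tent n k = 0 := by
  simp [tent, show min k (2 * n - k) = 0 by omega]

lemma norm_tent_succ_sub {n k : ℕ} (hk : k < 2 * n) :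
    ‖tent n (k + 1) - tent n k‖ = 1 / n := by
  rw [tent, tent, ← sub_div, norm_div, Complex.norm_natCast,
    norm_natCast_sub_natCast_eq_one (by omega)]

lemma tent_succ_of_two_mul_le {n k : ℕ} (hk : 2 * n ≤ k) : tent n (k + 1) = tent n k := by
  rw [tent_of_two_mul_le hk, tent_of_two_mul_le (by omega)]

lemma summable_tent_diff (n : ℕ) : Summable fun k => ‖tent n (k + 1) - tent n k‖ ^ 2 :=
  summable_of_ne_finset_zero (s := Finset.range (2 * n)) fun k hk => by
    simp [tent_succ_of_two_mul_le (not_lt.mp (Finset.mem_range.not.mp hk))]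

lemma dN_tent {n : ℕ} (hn : 1 ≤ n) : dN (tent n) = √(2 / n) := by
  rw [dN_eq_sqrt_sum (s := Finset.range (2 * n)) fun k hk =>
    tent_succ_of_two_mul_le (not_lt.mp (Finset.mem_range.not.mp hk))]
  rw [Finset.sum_congr rfl fun k hk => by rw [norm_tent_succ_sub (Finset.mem_range.mp hk)],
    Finset.sum_const, Finset.card_range, nsmul_eq_mul]
  have : (n : ℝ) ≠ 0 := Nat.cast_ne_zero.mpr (by omega)
  congr 1
  field_simp
  push_cast
  ring

lemma distToOthers_nonneg (n : ℕ) : 0 ≤ distToOthers n :=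
  Real.sInf_nonneg fun _ ⟨_, _, hr⟩ => hr ▸ Real.sqrt_nonneg _

lemma distToOthers_le {n : ℕ} (hn : 1 ≤ n) : distToOthers n ≤ √(2 / n) := by
  refine csInf_le ⟨0, fun _ ⟨_, _, hr⟩ => hr ▸ Real.sqrt_nonneg _⟩
    ⟨eVec n - tent n, ?_, by rw [sub_sub_cancel, dN_tent hn]⟩
  refine mem_span_eVec_of_eventually_zero (N := 2 * n) ?_ ?_ fun k hk => ?_
  · simp [eVec, tent_zero, show 0 ≠ n by omega]
  · simp [eVec, tent_self hn]
  · simp [eVec, tent_of_two_mul_le hk.le, show k ≠ n by omega]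

lemma tendsto_sqrt_two_div_natCast : Tendsto (fun n : ℕ => √(2 / n)) atTop (𝓝 0) := by
  simpa only [Real.sqrt_zero, Function.comp_def] using
    (Real.continuous_sqrt.tendsto 0).comp (tendsto_const_div_atTop_nhds_zero_nat 2)

/-- In `ℓ₂(Δ)`: `‖e_n‖ = √2` for every `n ≥ 1`, the distance from `e_n` to the span
of the other unit vectors tends to `0`, and consequently the coordinate functionals
are not uniformly bounded in `n`. -/
theorem stmt8 :
    (∀ n : ℕ, 1 ≤ n → dN (eVec n) = Real.sqrt 2) ∧
    Tendsto (fun n : ℕ => distToOthers (n + 1)) atTop (nhds 0) ∧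
    ¬ ∃ M : ℝ, ∀ n : ℕ, 1 ≤ n → ∀ c : ℕ → ℂ, c 0 = 0 →
      (Summable fun k => ‖c (k + 1) - c k‖ ^ 2) → ‖c n‖ ≤ M * dN c := by
  have hlim := tendsto_sqrt_two_div_natCast.comp (tendsto_add_atTop_nat 1)
  refine ⟨fun n hn => dN_eVec hn,
    squeeze_zero (fun n => distToOthers_nonneg _) (fun n => distToOthers_le (by omega)) hlim, ?_⟩
  rintro ⟨M, hM⟩
  obtain ⟨n, hn⟩ := ((mul_zero M ▸ hlim.const_mul M).eventually (gt_mem_nhds one_pos)).exists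
  have hbound := hM (n + 1) (by omega) (tent (n + 1)) (tent_zero _) (summable_tent_diff _)
  rw [tent_self (by omega), dN_tent (by omega), norm_one] at hbound
  exact lt_irrefl _ (hbound.trans_lt hn)
end
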